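/- arXiv:2506.02595 — 5 statements merged into one kernel-verified Lean document; each statement's English description precedes it below -/
import Mathlib

section
/- Let d ≥ 1, let φ : ℝᵈ → ℝ be continuously differentiable, and let x ∈ ℝᵈ. Then the upwind gradient discretisation is consistent with the squared gradient norm: |D_h φ(y)|² → ‖∇φ(x)‖² as h → 0⁺ and y → x; that is, for all sequences hₙ → 0⁺ and yₙ → x one has |D_{hₙ} φ(yₙ)|² → ‖∇φ(x)‖². -/
/-! Multiplying out `h⁻²`, the `i`-th summand of `|D_h φ(y)|²` is
`(max(φ(y) - φ(y + h eᵢ), φ(y) - φ(y - h eᵢ), 0) / h)²`. A `C¹` function is strictly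
differentiable at `x`, which is exactly what makes difference quotients with a moving base
point `yₙ → x` converge: the two one-sided quotients tend to `∓ ∂ᵢφ(x)`, so the summand tends to
`max(-∂ᵢφ(x), ∂ᵢφ(x), 0)² = ∂ᵢφ(x)²`. -/

open scoped BigOperators
open MeasureTheory
open scoped Classical

noncomputable section

namespace Paper

/-- `ℝᵈ` with the Euclidean structure. -/
abbrev E (d : ℕ) := EuclideanSpace ℝ (Fin d)

/-- The standard basis vector `eᵢ` of `ℝᵈ`. -/
def e (d : ℕ) (i : Fin d) : E d := EuclideanSpace.single i 1

/-- For a symmetric matrix, the maximum of the absolute values of its eigenvalues. -/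
def specNorm {d : ℕ} (M : Matrix (Fin d) (Fin d) ℝ) : ℝ :=
  if h : M.IsHermitian then ⨆ i, |h.eigenvalues i| else 0

/-- `(λ,Λ)`-uniform ellipticity of `F : S(d) → ℝ`. -/
def UniformlyElliptic (d : ℕ) (lam Lam : ℝ) (F : Matrix (Fin d) (Fin d) ℝ → ℝ) : Prop :=
  ∀ M N : Matrix (Fin d) (Fin d) ℝ, M.IsHermitian → N.PosSemidef →
    lam * specNorm N ≤ F M - F (M + N) ∧ F M - F (M + N) ≤ Lam * specNorm N

/-- The upwind discretisation `|D_h u (x)|²`. -/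
def upwindSq (d : ℕ) (h : ℝ) (u : E d → ℝ) (x : E d) : ℝ :=
  (1 / h ^ 2) * ∑ i : Fin d,
    max (max (u x - u (x + h • e d i)) (u x - u (x - h • e d i))) 0 ^ 2

/-- The monotone discretisation `L_h^A u (x)` of `Tr (A D²u)`. -/
def Lh (d : ℕ) (h : ℝ) (A : Matrix (Fin d) (Fin d) ℝ) (u : E d → ℝ) (x : E d) : ℝ :=
  (∑ i : Fin d, (A i i - ∑ j ∈ Finset.univ.erase i, |A i j|) *
      ((u (x + h • e d i) + u (x - h • e d i) - 2 * u x) / h ^ 2)) +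
  ∑ i : Fin d, ∑ j ∈ Finset.univ.filter (fun j => i < j),
    (max (A i j) 0 *
        ((u (x + h • (e d i + e d j)) + u (x - h • (e d i + e d j)) - 2 * u x) / h ^ 2) +
      max (-A i j) 0 *
        ((u (x + h • (e d i - e d j)) + u (x - h • (e d i - e d j)) - 2 * u x) / h ^ 2))

/-- Diagonal dominance of a matrix. -/
def DiagDominant {d : ℕ} (A : Matrix (Fin d) (Fin d) ℝ) : Prop :=
  ∀ i, ∑ j ∈ Finset.univ.erase i, |A i j| ≤ A i i

/-- Isaacs data with ellipticity constants `(λ, Λ)`: symmetric, diagonally dominant matrices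
with `λ I ≤ A_{α,β} ≤ Λ I`. -/
def IsaacsData (d : ℕ) {ιA ιB : Type*} (lam Lam : ℝ)
    (A : ιA → ιB → Matrix (Fin d) (Fin d) ℝ) : Prop :=
  ∀ a b, (A a b).IsHermitian ∧ DiagDominant (A a b) ∧
    (A a b - lam • (1 : Matrix (Fin d) (Fin d) ℝ)).PosSemidef ∧
    (Lam • (1 : Matrix (Fin d) (Fin d) ℝ) - A a b).PosSemidef

/-- Discretised Isaacs operator. -/
def Fh (d : ℕ) {ιA ιB : Type*} (h : ℝ) (A : ιA → ιB → Matrix (Fin d) (Fin d) ℝ)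
    (u : E d → ℝ) (x : E d) : ℝ :=
  ⨆ a : ιA, ⨅ b : ιB, -(Lh d h (A a b) u x)

/-- A finite grid `Ω̄_h = Ω_h ∪ ∂Ω_h` whose interior points have all stencil points in the grid. -/
structure Grid (d : ℕ) (h : ℝ) where
  interior : Finset (E d)
  boundary : Finset (E d)
  disj : Disjoint interior boundary
  nonempty : (interior ∪ boundary).Nonempty
  stencil_ax : ∀ x ∈ interior, ∀ i : Fin d,
    x + h • e d i ∈ interior ∪ boundary ∧ x - h • e d i ∈ interior ∪ boundary
  stencil_diag : ∀ x ∈ interior, ∀ i j : Fin d, i < j →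
    x + h • (e d i + e d j) ∈ interior ∪ boundary ∧
    x - h • (e d i + e d j) ∈ interior ∪ boundary ∧
    x + h • (e d i - e d j) ∈ interior ∪ boundary ∧
    x - h • (e d i - e d j) ∈ interior ∪ boundary

/-- The finite difference scheme `G_h` for the regularised pure degenerate equation. -/
def scheme (d : ℕ) {ιA ιB : Type*} {h : ℝ} (ε θ : ℝ)
    (A : ιA → ιB → Matrix (Fin d) (Fin d) ℝ) (G : Grid d h)
    (f g : E d → ℝ) (u : E d → ℝ) (x : E d) : ℝ :=
  if x ∈ G.interior then
    ε * u x + Fh d h A u x - f x / (ε + upwindSq d h u x) ^ (θ / 2)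
  else u x - g x

/-- The finite difference scheme `G_h` for the regularised free transmission problem. -/
def schemeT (d : ℕ) {ιA ιB : Type*} {h : ℝ} (ε : ℝ) (θe : ℝ → ℝ)
    (A : ιA → ιB → Matrix (Fin d) (Fin d) ℝ) (G : Grid d h)
    (f g : E d → ℝ) (u : E d → ℝ) (x : E d) : ℝ :=
  if x ∈ G.interior then
    ε * u x + Fh d h A u x - f x / (ε + upwindSq d h u x) ^ (θe (u x) / 2)
  else u x - g x

/-- The properties of the regularised degeneracy exponent `θ_ε` used in the transmission scheme. -/
def ThetaInterp (ε θ₁ θ₂ : ℝ) (θe : ℝ → ℝ) : Prop :=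
  Monotone θe ∧ (∀ t, θ₁ ≤ θe t ∧ θe t ≤ θ₂) ∧
    (∀ t, t ≤ -ε → θe t = θ₁) ∧ (∀ t, ε ≤ t → θe t = θ₂)

/-- The Hessian matrix of `φ : ℝᵈ → ℝ` at `x`. -/
def hessianMatrix (d : ℕ) (φ : E d → ℝ) (x : E d) : Matrix (Fin d) (Fin d) ℝ :=
  Matrix.of fun i j => fderiv ℝ (fun y => fderiv ℝ φ y (e d j)) x (e d i)

/-- The piecewise-linear interpolation `Θ_ε` between the degeneracy rates `θ₁` and `θ₂`. -/
def ThetaStep (θ₁ θ₂ ε t : ℝ) : ℝ :=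
  if t ≤ -ε then θ₁
  else if t < ε then (θ₂ - θ₁) / (2 * ε) * t + (θ₁ + θ₂) / 2
  else θ₂

open Filter Topology

theorem _root_.HasStrictFDerivAt.tendsto_slope_of_tendsto
    {E F : Type*} [NormedAddCommGroup E] [NormedSpace ℝ E]
    [NormedAddCommGroup F] [NormedSpace ℝ F]
    {f : E → F} {f' : E →L[ℝ] F} {x : E} (hf : HasStrictFDerivAt f f' x) (v : E)
    {ι : Type*} {l : Filter ι} {h : ι → ℝ} {y : ι → E}
    (hh : Tendsto h l (𝓝[≠] 0)) (hy : Tendsto y l (𝓝 x)) :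
    Tendsto (fun n => (h n)⁻¹ • (f (y n + h n • v) - f (y n))) l (𝓝 (f' v)) := by
  have hh0 : Tendsto h l (𝓝 0) := tendsto_nhds_of_tendsto_nhdsWithin hh
  have hpair : Tendsto (fun n => (y n + h n • v, y n)) l (𝓝 (x, x)) := by
    refine Tendsto.prodMk_nhds ?_ hy
    simpa using hy.add (hh0.smul_const v)
  have hstep : (fun n => (y n + h n • v) - y n) =O[l] h :=
    Asymptotics.isBigO_of_le' (c := ‖v‖) _ fun n => by simp [norm_smul, mul_comm]
  have hrem := ((hf.isLittleO.comp_tendsto hpair).trans_isBigO hstep).tendsto_inv_smul_nhds_zero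
  rw [← zero_add (f' v)]
  refine (hrem.add_const (f' v)).congr' ?_
  filter_upwards [hh self_mem_nhdsWithin] with n hn
  simp [smul_sub, inv_smul_smul₀ hn]

theorem _root_.HasStrictFDerivAt.tendsto_upwind_slope
    {E : Type*} [NormedAddCommGroup E] [NormedSpace ℝ E]
    {f : E → ℝ} {f' : E →L[ℝ] ℝ} {x : E} (hf : HasStrictFDerivAt f f' x) (v : E)
    {ι : Type*} {l : Filter ι} {h : ι → ℝ} {y : ι → E}
    (hh : Tendsto h l (𝓝[>] 0)) (hy : Tendsto y l (𝓝 x)) :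
    Tendsto (fun n => max (max (f (y n) - f (y n + h n • v)) (f (y n) - f (y n - h n • v))) 0
      / h n) l (𝓝 |f' v|) := by
  have hne : Tendsto h l (𝓝[≠] 0) :=
    hh.mono_right (nhdsWithin_mono _ fun _ (hpos : 0 < _) => hpos.ne')
  have hfwd := (hf.tendsto_slope_of_tendsto v hne hy).neg
  have hbwd := (hf.tendsto_slope_of_tendsto (-v) hne hy).neg
  rw [map_neg, neg_neg] at hbwd
  have hlim := (hfwd.max hbwd).max (tendsto_const_nhds (x := (0 : ℝ)))
  rw [max_comm (-f' v), ← abs_eq_max_neg, max_eq_left (abs_nonneg _)] at hlim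
  refine hlim.congr' ?_
  filter_upwards [hh self_mem_nhdsWithin] with n hn
  simp only [smul_eq_mul, smul_neg, ← sub_eq_add_neg]
  rw [← max_div_div_right hn.le, ← max_div_div_right hn.le, zero_div]
  congr 2 <;> ring

theorem upwindSq_eq_sum_sq_div (d : ℕ) (h : ℝ) (u : E d → ℝ) (x : E d) :
    upwindSq d h u x =
      ∑ i, (max (max (u x - u (x + h • e d i)) (u x - u (x - h • e d i))) 0 / h) ^ 2 := by
  simp only [upwindSq, Finset.mul_sum, div_pow, one_div, inv_mul_eq_div]

theorem norm_gradient_sq_eq_sum {d : ℕ} (φ : E d → ℝ) (x : E d) :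
    ‖gradient φ x‖ ^ 2 = ∑ i, fderiv ℝ φ x (e d i) ^ 2 := by
  rw [EuclideanSpace.real_norm_sq_eq]
  refine Finset.sum_congr rfl fun i _ => ?_
  rw [← inner_gradient_left, e, EuclideanSpace.inner_single_right, one_mul]
  rfl

theorem upwind_consistent_general {d : ℕ}
    (φ : E d → ℝ) (hφ : ContDiff ℝ 1 φ) (x : E d)
    (hs : ℕ → ℝ) (ys : ℕ → E d)
    (hpos : ∀ n, 0 < hs n)
    (hh : Filter.Tendsto hs Filter.atTop (nhds 0))
    (hy : Filter.Tendsto ys Filter.atTop (nhds x)) :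
    Filter.Tendsto (fun n => upwindSq d (hs n) φ (ys n)) Filter.atTop
      (nhds (‖gradient φ x‖ ^ 2)) := by
  have hf : HasStrictFDerivAt φ (fderiv ℝ φ x) x :=
    hφ.contDiffAt.hasStrictFDerivAt one_ne_zero
  have hh' : Tendsto hs atTop (𝓝[>] 0) :=
    tendsto_nhdsWithin_of_tendsto_nhds_of_eventually_within _ hh (Eventually.of_forall hpos)
  simp only [upwindSq_eq_sum_sq_div, norm_gradient_sq_eq_sum, ← sq_abs (fderiv ℝ φ x _)]
  exact tendsto_finsetSum _ fun i _ => (hf.tendsto_upwind_slope (e d i) hh' hy).pow 2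

/-- Consistency of the upwind gradient discretisation:
for `φ` continuously differentiable, `|D_{hₙ} φ(yₙ)|² → ‖∇φ(x)‖²` whenever
`hₙ → 0⁺` and `yₙ → x`. -/
theorem upwind_consistent {d : ℕ} (hd : 1 ≤ d)
    (φ : E d → ℝ) (hφ : ContDiff ℝ 1 φ) (x : E d)
    (hs : ℕ → ℝ) (ys : ℕ → E d)
    (hpos : ∀ n, 0 < hs n)
    (hh : Filter.Tendsto hs Filter.atTop (nhds 0))
    (hy : Filter.Tendsto ys Filter.atTop (nhds x)) :
    Filter.Tendsto (fun n => upwindSq d (hs n) φ (ys n)) Filter.atTop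
      (nhds (‖gradient φ x‖ ^ 2)) :=
  upwind_consistent_general φ hφ x hs ys hpos hh hy

end Paper
end
end

section
/- Let d ≥ 1, h > 0, and let A be a symmetric d×d real matrix that is diagonally dominant. Let x ∈ ℝᵈ and let u, v : ℝᵈ → ℝ satisfy u(y) ≤ v(y) for all y and u(x) = v(x). Then −L_h^A v(x) ≤ −L_h^A u(x); equivalently, L_h^A u(x) ≤ L_h^A v(x). In other words, the discretisation u ↦ −L_h^A u is degenerate elliptic. -/
open scoped BigOperators
open MeasureTheory
open scoped Classical

noncomputable section

namespace Paper

/-- For a symmetric diagonally dominant matrix `A`, the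
discretisation `u ↦ −L_h^A u` is degenerate elliptic: if `u ≤ v` and
`u(x) = v(x)` then `−L_h^A v(x) ≤ −L_h^A u(x)`, i.e. `L_h^A u(x) ≤ L_h^A v(x)`. -/
theorem Lh_degenerateElliptic {d : ℕ} (hd : 1 ≤ d) (h : ℝ) (hh : 0 < h)
    (A : Matrix (Fin d) (Fin d) ℝ) (hA : A.IsHermitian) (hdd : DiagDominant A)
    (x : E d) (u v : E d → ℝ) (huv : ∀ y, u y ≤ v y) (hux : u x = v x) :
    -(Lh d h A v x) ≤ -(Lh d h A u x) ∧ Lh d h A u x ≤ Lh d h A v x := by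
  have key : Lh d h A u x ≤ Lh d h A v x := by
    unfold Lh
    have hh2 : (0:ℝ) < h ^ 2 := by positivity
    have hdiff : ∀ a b : E d, (u a + u b - 2 * u x) / h ^ 2 ≤ (v a + v b - 2 * v x) / h ^ 2 := by
      intro a b
      have h1 := huv a; have h2 := huv b
      apply div_le_div_of_nonneg_right (by linarith) hh2.le |>.trans_eq rfl
    refine add_le_add (Finset.sum_le_sum ?_) (Finset.sum_le_sum ?_)
    · intro i _
      exact mul_le_mul_of_nonneg_left (hdiff _ _) (sub_nonneg.mpr (hdd i))
    · intro i _
      refine Finset.sum_le_sum fun j _ => add_le_add ?_ ?_ <;>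
        exact mul_le_mul_of_nonneg_left (hdiff _ _) (le_max_right _ _)
  exact ⟨neg_le_neg key, key⟩

end Paper
end
end

section
/- Let d ≥ 1 and Λ > 0, and let A be a symmetric d×d real matrix all of whose entries are bounded by Λ in absolute value. Let φ : ℝᵈ → ℝ be four times continuously differentiable with all fourth-order partial derivatives bounded in absolute value by M₄ on ℝᵈ. Then there is a constant C depending only on d such that |L_h^A φ(x) − Tr(A D²φ(x))| ≤ C Λ M₄ h² for every x ∈ ℝᵈ and every h > 0; in particular, L_h^A φ(x) → Tr(A D²φ(x)) as h → 0⁺. -/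
open scoped BigOperators
open MeasureTheory
open scoped Classical

noncomputable section

namespace Paper

/-!
Taylor expansion of `t ↦ φ (x + t • v)` to third order at `±h` shows that each second difference
quotient `(φ (x + h • v) + φ (x - h • v) - 2 φ x) / h²` equals `D²φ(x)(v, v)` up to
`M₄ ‖v‖⁴ h² / 12`, the odd-order terms cancelling. The coefficients of `L_h^A` are designed so that
the same combination applied to the exact values `D²φ(x)(v, v)` gives `Tr (A D²φ(x))`: the stencil
`eᵢ ± eⱼ` contributes `|aᵢⱼ| (Hᵢᵢ + Hⱼⱼ) + aᵢⱼ (Hᵢⱼ + Hⱼᵢ)`, and the `|aᵢⱼ|` part is cancelled by the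
correction of the diagonal coefficients. Since all coefficients are `O(d Λ)` and all stencil vectors
have norm at most `2`, the errors add up to `O(d² Λ M₄ h²)`.
-/

open Finset Filter Topology

theorem abs_sub_sum_iteratedDeriv_le {g : ℝ → ℝ} {n : ℕ} (hg : ContDiff ℝ (n + 1) g) {M : ℝ}
    (hM : ∀ t, |iteratedDeriv (n + 1) g t| ≤ M) (x₀ x : ℝ) :
    |g x - ∑ k ∈ range (n + 1), iteratedDeriv k g x₀ * (x - x₀) ^ k / k.factorial|
      ≤ M * |x - x₀| ^ (n + 1) / (n + 1).factorial := by
  have htaylor : ∀ s : Set ℝ, UniqueDiffOn ℝ s → x₀ ∈ s → taylorWithinEval g n s x₀ x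
      = ∑ k ∈ range (n + 1), iteratedDeriv k g x₀ * (x - x₀) ^ k / k.factorial := by
    intro s hs hx₀
    rw [taylor_within_apply]
    refine sum_congr rfl fun k hk => ?_
    rw [iteratedDerivWithin_eq_iteratedDeriv hs (hg.contDiffAt.of_le ?_) hx₀, smul_eq_mul]
    · ring
    · exact_mod_cast (mem_range.1 hk).le
  rcases eq_or_ne x₀ x with rfl | hne
  · rw [← htaylor _ uniqueDiffOn_univ (Set.mem_univ _), taylorWithinEval_self]
    simp
  obtain ⟨ξ, -, hξ⟩ := taylor_mean_remainder_lagrange_iteratedDeriv hne hg.contDiffOn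
  rw [← htaylor _ (uniqueDiffOn_uIcc hne) Set.left_mem_uIcc, hξ, abs_div, abs_mul, abs_pow,
    Nat.abs_cast]
  gcongr
  exact hM ξ

section SecondDifference

variable {F : Type*} [NormedAddCommGroup F] [NormedSpace ℝ F]

theorem iteratedDeriv_comp_line {n : WithTop ℕ∞} {φ : F → ℝ} (hφ : ContDiff ℝ n φ) (x v : F)
    {k : ℕ} (hk : k ≤ n) (t : ℝ) :
    iteratedDeriv k (fun s : ℝ => φ (x + s • v)) t
      = iteratedFDeriv ℝ k φ (x + t • v) (fun _ => v) := by
  have hshift : ContDiff ℝ n fun z => φ (x + z) := hφ.comp (contDiff_const.add contDiff_id)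
  have hcomp : (fun s : ℝ => φ (x + s • v))
      = (fun z => φ (x + z)) ∘ ContinuousLinearMap.toSpanSingleton ℝ v := by
    ext s; simp
  rw [iteratedDeriv_eq_iteratedFDeriv, hcomp,
    ContinuousLinearMap.iteratedFDeriv_comp_right _ hshift _ hk,
    ContinuousMultilinearMap.compContinuousLinearMap_apply, iteratedFDeriv_comp_add_left]
  simp

theorem abs_secondDiffQuot_sub_le {φ : F → ℝ} (hφ : ContDiff ℝ 4 φ) {M : ℝ}
    (hM : ∀ y, ‖iteratedFDeriv ℝ 4 φ y‖ ≤ M) (x v : F) {h : ℝ} (hh : h ≠ 0) :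
    |(φ (x + h • v) + φ (x - h • v) - 2 * φ x) / h ^ 2 - fderiv ℝ (fderiv ℝ φ) x v v|
      ≤ M * ‖v‖ ^ 4 * h ^ 2 / 12 := by
  set g : ℝ → ℝ := fun s => φ (x + s • v)
  have hg : ContDiff ℝ (3 + 1) g :=
    hφ.comp (contDiff_const.add (contDiff_id.smul contDiff_const))
  have hderiv : ∀ k ≤ 4, ∀ t, iteratedDeriv k g t
      = iteratedFDeriv ℝ k φ (x + t • v) (fun _ => v) :=
    fun k hk t => iteratedDeriv_comp_line hφ x v (by exact_mod_cast hk) t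
  have hM' : ∀ t, |iteratedDeriv (3 + 1) g t| ≤ M * ‖v‖ ^ 4 := fun t => by
    rw [hderiv 4 le_rfl, ← Real.norm_eq_abs]
    refine ((iteratedFDeriv ℝ 4 φ _).le_opNorm _).trans ?_
    simpa using mul_le_mul_of_nonneg_right (hM (x + t • v)) (by positivity)
  have hfwd := abs_sub_sum_iteratedDeriv_le hg hM' 0 h
  have hbwd := abs_sub_sum_iteratedDeriv_le hg hM' 0 (-h)
  simp only [sum_range_succ, sum_range_zero, hderiv _ (by norm_num : 1 ≤ 4),
    hderiv _ (by norm_num : 2 ≤ 4), hderiv _ (by norm_num : 3 ≤ 4), iteratedDeriv_zero,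
    zero_smul, add_zero, sub_zero, abs_neg, iteratedFDeriv_two_apply, g, neg_smul,
    ← sub_eq_add_neg] at hfwd hbwd
  rw [Even.pow_abs (by decide)] at hfwd hbwd
  norm_num [Nat.factorial] at hfwd hbwd
  have hnum : |φ (x + h • v) + φ (x - h • v) - 2 * φ x - h ^ 2 * fderiv ℝ (fderiv ℝ φ) x v v|
      ≤ M * ‖v‖ ^ 4 * h ^ 4 / 12 := by
    rw [abs_le] at hfwd hbwd ⊢
    constructor <;> linarith [hfwd.1, hfwd.2, hbwd.1, hbwd.2]
  have hh2 : 0 < h ^ 2 := by positivity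
  rw [← mul_div_cancel_left₀ (fderiv ℝ (fderiv ℝ φ) x v v) hh2.ne', ← sub_div, abs_div,
    abs_of_pos hh2, div_le_iff₀ hh2]
  exact hnum.trans_eq (by ring)

end SecondDifference

theorem sum_sum_lt_add_swap {ι M : Type*} [Fintype ι] [LinearOrder ι] [AddCommMonoid M]
    (f : ι → ι → M) :
    ∑ i, ∑ j with i < j, (f i j + f j i) = ∑ i, ∑ j ∈ univ.erase i, f i j := by
  have hswap : ∑ i, ∑ j with i < j, f j i = ∑ i, ∑ j with j < i, f i j :=
    sum_comm' fun i j => by simp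
  have hsplit : ∀ i, ∑ j ∈ univ.erase i, f i j
      = ∑ j with i < j, f i j + ∑ j with j < i, f i j := fun i => by
    rw [← sum_filter_add_sum_filter_not (univ.erase i) (i < ·)]
    congr 1 <;>
      (congr 1; ext j; simp only [mem_filter, mem_erase, mem_univ, and_true, true_and]; grind)
  simp only [sum_add_distrib, hswap, hsplit]

section Stencil

variable {d : ℕ}

theorem norm_e (i : Fin d) : ‖e d i‖ = 1 := by simp [e]

theorem hessianMatrix_eq {φ : E d → ℝ} {x : E d} (hφ : DifferentiableAt ℝ (fderiv ℝ φ) x) :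
    hessianMatrix d φ x = Matrix.of fun i j => fderiv ℝ (fderiv ℝ φ) x (e d i) (e d j) := by
  ext i j
  simp [hessianMatrix, fderiv_clm_apply hφ (differentiableAt_const (e d j))]

def stencilSum (A : Matrix (Fin d) (Fin d) ℝ) (D : E d → ℝ) : ℝ :=
  (∑ i, (A i i - ∑ j ∈ univ.erase i, |A i j|) * D (e d i)) +
  ∑ i, ∑ j with i < j,
    (max (A i j) 0 * D (e d i + e d j) + max (-A i j) 0 * D (e d i - e d j))

theorem Lh_eq_stencilSum (h : ℝ) (A : Matrix (Fin d) (Fin d) ℝ) (u : E d → ℝ) (x : E d) :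
    Lh d h A u x = stencilSum A fun v => (u (x + h • v) + u (x - h • v) - 2 * u x) / h ^ 2 :=
  rfl

theorem stencilSum_sub (A : Matrix (Fin d) (Fin d) ℝ) (D₁ D₂ : E d → ℝ) :
    stencilSum A (D₁ - D₂) = stencilSum A D₁ - stencilSum A D₂ := by
  simp only [stencilSum, Pi.sub_apply, mul_sub, sub_add_sub_comm, sum_sub_distrib]

theorem stencilSum_bilinear {A : Matrix (Fin d) (Fin d) ℝ} (hA : A.IsHermitian)
    (B : E d →L[ℝ] E d →L[ℝ] ℝ) :
    stencilSum A (fun v => B v v) = (A * Matrix.of fun i j => B (e d i) (e d j)).trace := by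
  set F : Fin d → Fin d → ℝ := fun i j => |A i j| * B (e d i) (e d i) + A i j * B (e d j) (e d i)
  have hpair : ∀ i j, max (A i j) 0 * B (e d i + e d j) (e d i + e d j)
      + max (-A i j) 0 * B (e d i - e d j) (e d i - e d j) = F i j + F j i := fun i j => by
    have hsymm : A j i = A i j := by simpa using hA.apply i j
    simp only [F, hsymm, map_add, map_sub, add_apply, sub_apply]
    rcases le_total (A i j) 0 with hneg | hpos
    · rw [max_eq_right hneg, max_eq_left (neg_nonneg.2 hneg), abs_of_nonpos hneg]; ring
    · rw [max_eq_left hpos, max_eq_right (neg_nonpos.2 hpos), abs_of_nonneg hpos]; ring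
  calc stencilSum A (fun v => B v v)
      = ∑ i, ((A i i - ∑ j ∈ univ.erase i, |A i j|) * B (e d i) (e d i)
          + ∑ j ∈ univ.erase i, F i j) := by
        rw [stencilSum, sum_add_distrib, ← sum_sum_lt_add_swap]
        simp only [hpair]
    _ = ∑ i, ∑ j, A i j * B (e d j) (e d i) := by
        refine sum_congr rfl fun i _ => ?_
        rw [← add_sum_erase _ _ (mem_univ i)]
        simp only [F, sum_add_distrib, ← sum_mul]
        ring
    _ = (A * Matrix.of fun i j => B (e d i) (e d j)).trace := by
        simp [Matrix.trace, Matrix.mul_apply]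

theorem abs_stencilSum_le {A : Matrix (Fin d) (Fin d) ℝ} {Λ : ℝ} (hA : ∀ i j, |A i j| ≤ Λ)
    {D : E d → ℝ} {b : ℝ} (hD : ∀ v, ‖v‖ ≤ 2 → |D v| ≤ b) :
    |stencilSum A D| ≤ 2 * d ^ 2 * Λ * b := by
  have hb : 0 ≤ b := (abs_nonneg _).trans (hD 0 (by simp))
  have hrow : ∀ i, ∑ j, |A i j| ≤ d * Λ := fun i => by
    simpa using sum_le_card_nsmul univ (fun j => |A i j|) Λ fun j _ => hA i j
  have hdiag : ∀ i, |(A i i - ∑ j ∈ univ.erase i, |A i j|) * D (e d i)| ≤ d * Λ * b := fun i => by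
    have hcoef : abs (A i i - ∑ j ∈ univ.erase i, |A i j|) ≤ ∑ j, |A i j| := by
      rw [← add_sum_erase _ _ (mem_univ i)]
      refine (abs_sub _ _).trans_eq ?_
      rw [abs_of_nonneg (sum_nonneg fun j _ => abs_nonneg (A i j))]
    rw [abs_mul]
    exact mul_le_mul (hcoef.trans (hrow i)) (hD _ (by simp [norm_e])) (abs_nonneg _)
      ((abs_nonneg _).trans (hcoef.trans (hrow i)))
  have hpair : ∀ i j, |max (A i j) 0 * D (e d i + e d j) + max (-A i j) 0 * D (e d i - e d j)|
      ≤ Λ * b := fun i j => by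
    have hnorm : ‖e d i + e d j‖ ≤ 2 ∧ ‖e d i - e d j‖ ≤ 2 := by
      constructor
      · exact (norm_add_le _ _).trans (by simp [norm_e]; norm_num)
      · exact (norm_sub_le _ _).trans (by simp [norm_e]; norm_num)
    calc _ ≤ max (A i j) 0 * b + max (-A i j) 0 * b := by
          refine (abs_add_le _ _).trans (add_le_add ?_ ?_) <;>
            rw [abs_mul, abs_of_nonneg (le_max_right _ _)] <;>
            exact mul_le_mul_of_nonneg_left (hD _ (by tauto)) (le_max_right _ _)
      _ = |A i j| * b := by rw [← add_mul, max_zero_add_max_neg_zero_eq_abs_self]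
      _ ≤ Λ * b := mul_le_mul_of_nonneg_right (hA i j) hb
  calc |stencilSum A D|
      ≤ ∑ i, |(A i i - ∑ j ∈ univ.erase i, |A i j|) * D (e d i)| + ∑ i, ∑ j,
          |max (A i j) 0 * D (e d i + e d j) + max (-A i j) 0 * D (e d i - e d j)| := by
        refine (abs_add_le _ _).trans (add_le_add (abs_sum_le_sum_abs _ _)
          ((abs_sum_le_sum_abs _ _).trans (sum_le_sum fun i _ => ?_)))
        exact (abs_sum_le_sum_abs _ _).trans
          (sum_le_sum_of_subset_of_nonneg (filter_subset _ _) fun _ _ _ => abs_nonneg _)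
    _ ≤ ∑ _i : Fin d, d * Λ * b + ∑ _i : Fin d, ∑ _j : Fin d, Λ * b := by
        gcongr
        exacts [hdiag _, hpair _ _]
    _ = 2 * d ^ 2 * Λ * b := by simp; ring

end Stencil

theorem tendsto_nhdsGT_of_abs_sub_le_mul_sq {f : ℝ → ℝ} {L K : ℝ}
    (hf : ∀ h, 0 < h → |f h - L| ≤ K * h ^ 2) : Tendsto f (𝓝[>] 0) (𝓝 L) := by
  have hK : Tendsto (fun h : ℝ => K * h ^ 2) (𝓝[>] 0) (𝓝 0) := by
    have hcont : Continuous fun h : ℝ => K * h ^ 2 := by fun_prop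
    exact (hcont.tendsto' 0 0 (by simp)).mono_left nhdsWithin_le_nhds
  refine tendsto_sub_nhds_zero_iff.mp (squeeze_zero_norm' ?_ hK)
  filter_upwards [self_mem_nhdsWithin] with h hh
  exact hf h hh

/-- Consistency of `L_h^A` with `Tr(A D²φ)`, with error
`≤ C Λ M₄ h²` where `C` depends only on `d`; in particular
`L_h^A φ(x) → Tr(A D²φ(x))` as `h → 0⁺`. -/
theorem Lh_consistent {d : ℕ} (hd : 1 ≤ d) :
    ∃ C : ℝ, 0 < C ∧
      ∀ (Lam : ℝ), 0 < Lam →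
      ∀ (A : Matrix (Fin d) (Fin d) ℝ), A.IsHermitian → (∀ i j, |A i j| ≤ Lam) →
      ∀ (M₄ : ℝ), 0 ≤ M₄ →
      ∀ (φ : E d → ℝ), ContDiff ℝ 4 φ → (∀ y, ‖iteratedFDeriv ℝ 4 φ y‖ ≤ M₄) →
      ∀ (x : E d),
        (∀ (h : ℝ), 0 < h →
          |Lh d h A φ x - (A * hessianMatrix d φ x).trace| ≤ C * Lam * M₄ * h ^ 2) ∧
        Filter.Tendsto (fun h => Lh d h A φ x) (nhdsWithin 0 (Set.Ioi 0))
          (nhds ((A * hessianMatrix d φ x).trace)) := by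
  have hd₀ : (0 : ℝ) < d := by exact_mod_cast hd
  refine ⟨8 / 3 * d ^ 2, by positivity, ?_⟩
  intro Lam _ A hA hALam M₄ hM₄ φ hφ hM x
  have hφ₂ : DifferentiableAt ℝ (fderiv ℝ φ) x :=
    ((hφ.fderiv_right (m := 1) (by norm_num)).differentiable one_ne_zero).differentiableAt
  have hbound : ∀ h : ℝ, 0 < h →
      |Lh d h A φ x - (A * hessianMatrix d φ x).trace| ≤ 8 / 3 * d ^ 2 * Lam * M₄ * h ^ 2 := by
    intro h hh
    rw [hessianMatrix_eq hφ₂, ← stencilSum_bilinear hA, Lh_eq_stencilSum, ← stencilSum_sub]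
    refine (abs_stencilSum_le (b := 4 / 3 * M₄ * h ^ 2) hALam fun v hv => ?_).trans_eq (by ring)
    calc _ ≤ M₄ * ‖v‖ ^ 4 * h ^ 2 / 12 := abs_secondDiffQuot_sub_le hφ hM x v hh.ne'
      _ ≤ M₄ * 2 ^ 4 * h ^ 2 / 12 := by gcongr
      _ = 4 / 3 * M₄ * h ^ 2 := by ring
  exact ⟨hbound, tendsto_nhdsGT_of_abs_sub_le_mul_sq hbound⟩

end Paper
end
end

section
/- (Lipschitz continuity of the scheme for the pure degenerate equation.) Let d ≥ 1, 0 < λ ≤ Λ, h > 0, ε ∈ (0,1), θ ≥ 1 and K_f ≥ 0. Fix a grid Ω̄_h = Ω_h ∪ ∂Ω_h, Isaacs data with ellipticity constants (λ,Λ), f : Ω_h → ℝ with |f(x)| ≤ K_f for all x ∈ Ω_h, and g : ∂Ω_h → ℝ, and let G_h be the associated scheme. Then there exists a constant C > 0 depending only on d, Λ, ε, h, θ and K_f such that for all grid functions u, v : Ω̄_h → ℝ, max_{x ∈ Ω̄_h} |G_h(u, x) − G_h(v, x)| ≤ C max_{x ∈ Ω̄_h} |u(x) − v(x)|. -/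
open scoped BigOperators
open MeasureTheory
open scoped Classical

noncomputable section

namespace Paper

/-!
At a boundary point `G_h(u, x) - G_h(v, x) = u x - v x`. At an interior point the difference
splits into three terms. The term `ε u` is `ε`-Lipschitz. `F_h` is a sup-inf of the linear
operators `-L_h^A`, and diagonal dominance together with `A ≤ Λ I` puts every coefficient of
`L_h^A` in `[0, Λ]`, so each `L_h^A`, hence `F_h`, is Lipschitz with a constant depending on
`d, Λ, h`. For the forcing term write `(ε + |D_h u|²)^(θ/2) = ρ(u)^θ` with
`ρ(u) = √(ε + |D_h u|²) ≥ √ε`: `ρ` is Lipschitz in `u` because `|D_h u|` is the Euclidean length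
of a vector of upwind quotients, each Lipschitz in `u`, and `r ↦ r^(-θ)` is Lipschitz on
`[√ε, ∞)` with constant `θ √ε^(-θ-1)` by the mean value theorem.
-/

section InfSup

variable {ι : Sort*} [Nonempty ι] {f g : ι → ℝ} {c : ℝ}

-- No boundedness is assumed: `f` is bounded above iff `g` is, and otherwise both suprema are
-- the junk value `0`.
lemma abs_ciSup_sub_ciSup_le (h : ∀ i, |f i - g i| ≤ c) :
    |(⨆ i, f i) - ⨆ i, g i| ≤ c := by
  have hc : 0 ≤ c := (abs_nonneg _).trans (h (Classical.arbitrary ι))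
  have one_sided : ∀ φ ψ : ι → ℝ, (∀ i, |φ i - ψ i| ≤ c) → BddAbove (Set.range ψ) →
      BddAbove (Set.range φ) ∧ ⨆ i, φ i ≤ (⨆ i, ψ i) + c := by
    intro φ ψ h hψ
    have hφψ : ∀ i, φ i ≤ ψ i + c := fun i => by linarith [(abs_le.mp (h i)).2]
    obtain ⟨b, hb⟩ := hψ
    refine ⟨⟨b + c, Set.forall_mem_range.2 fun i => (hφψ i).trans ?_⟩,
      ciSup_le fun i => (hφψ i).trans ?_⟩
    · exact add_le_add_left (hb ⟨i, rfl⟩) c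
    · exact add_le_add_left (le_ciSup ⟨b, hb⟩ i) c
  have h' : ∀ i, |g i - f i| ≤ c := fun i => abs_sub_comm (f i) (g i) ▸ h i
  by_cases hf : BddAbove (Set.range f)
  · have hg := (one_sided g f h' hf).1
    rw [abs_sub_le_iff]
    constructor <;> linarith [(one_sided f g h hg).2, (one_sided g f h' hf).2]
  · have hg : ¬BddAbove (Set.range g) := fun hg => hf (one_sided f g h hg).1
    simpa [Real.iSup_of_not_bddAbove hf, Real.iSup_of_not_bddAbove hg] using hc

lemma abs_ciInf_sub_ciInf_le (h : ∀ i, |f i - g i| ≤ c) :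
    |(⨅ i, f i) - ⨅ i, g i| ≤ c := by
  have hneg : ∀ f : ι → ℝ, ⨅ i, f i = -⨆ i, -f i := by
    intro f
    rw [iInf, Real.sInf_def, iSup]
    congr 2
    ext
    simp [neg_eq_iff_eq_neg]
  rw [hneg f, hneg g, neg_sub_neg, abs_sub_comm]
  exact abs_ciSup_sub_ciSup_le fun i => by rw [neg_sub_neg, abs_sub_comm]; exact h i

end InfSup

lemma abs_rpow_neg_sub_rpow_neg_le {θ c a b : ℝ} (hθ : 0 ≤ θ) (hc : 0 < c) (ha : c ≤ a)
    (hb : c ≤ b) : |a ^ (-θ) - b ^ (-θ)| ≤ θ * c ^ (-θ - 1) * |a - b| := by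
  have hderiv : ∀ t ∈ Set.Ici c, HasDerivAt (fun t : ℝ => t ^ (-θ)) (-θ * t ^ (-θ - 1)) t :=
    fun t ht => Real.hasDerivAt_rpow_const (Or.inl (hc.trans_le ht).ne')
  refine (convex_Ici c).norm_image_sub_le_of_norm_deriv_le
    (fun t ht => (hderiv t ht).differentiableAt) (fun t ht => ?_) hb ha
  rw [(hderiv t ht).deriv, Real.norm_eq_abs, abs_mul, abs_neg, abs_of_nonneg hθ,
    abs_of_pos (Real.rpow_pos_of_pos (hc.trans_le ht) _)]
  exact mul_le_mul_of_nonneg_left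
    (Real.rpow_le_rpow_of_nonpos hc ht (by linarith)) hθ

lemma abs_sqrt_add_sq_sub_sqrt_add_sq_le {ε : ℝ} (hε : 0 ≤ ε) (s t : ℝ) :
    |√(ε + s ^ 2) - √(ε + t ^ 2)| ≤ |s - t| := by
  have hs := Real.sq_sqrt (by positivity : 0 ≤ ε + s ^ 2)
  have ht := Real.sq_sqrt (by positivity : 0 ≤ ε + t ^ 2)
  -- `(ε + s²)(ε + t²) = (ε + st)² + ε(s - t)²`
  have hprod : ε + s * t ≤ √(ε + s ^ 2) * √(ε + t ^ 2) := by
    rw [← Real.sqrt_mul (by positivity)]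
    refine Real.le_sqrt_of_sq_le ?_
    nlinarith [mul_nonneg hε (sq_nonneg (s - t))]
  rw [← sq_le_sq]
  nlinarith

lemma abs_sum_le_card_mul {ι : Type*} (s : Finset ι) (f : ι → ℝ) {B : ℝ}
    (h : ∀ i ∈ s, |f i| ≤ B) : |∑ i ∈ s, f i| ≤ s.card * B := by
  simpa using (Finset.abs_sum_le_sum_abs f s).trans (Finset.sum_le_card_nsmul s _ B h)

lemma diag_le_of_posSemidef_smul_one_sub {d : ℕ} {A : Matrix (Fin d) (Fin d) ℝ} {Lam : ℝ}
    (h : (Lam • (1 : Matrix (Fin d) (Fin d) ℝ) - A).PosSemidef) (i : Fin d) : A i i ≤ Lam := by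
  simpa using h.diag_nonneg (i := i)

namespace DiagDominant

variable {d : ℕ} {A : Matrix (Fin d) (Fin d) ℝ}

lemma diag_nonneg (hA : DiagDominant A) (i : Fin d) : 0 ≤ A i i :=
  (Finset.sum_nonneg fun _ _ => abs_nonneg _).trans (hA i)

lemma abs_apply_le (hA : DiagDominant A) {i j : Fin d} (hij : j ≠ i) : |A i j| ≤ A i i :=
  (Finset.single_le_sum (fun k _ => abs_nonneg (A i k))
    (Finset.mem_erase.2 ⟨hij, Finset.mem_univ j⟩)).trans (hA i)

end DiagDominant

lemma Lh_sub {d : ℕ} (h : ℝ) (A : Matrix (Fin d) (Fin d) ℝ) (u v : E d → ℝ) (x : E d) :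
    Lh d h A u x - Lh d h A v x = Lh d h A (fun y => u y - v y) x := by
  simp only [Lh, add_sub_add_comm, ← Finset.sum_sub_distrib]
  congr 1 <;> refine Finset.sum_congr rfl fun i _ => ?_
  · ring
  · exact Finset.sum_congr rfl fun j _ => by ring

lemma abs_mul_secondDiff_le {c Lam a b w M h : ℝ} (hc : 0 ≤ c) (hcLam : c ≤ Lam)
    (ha : |a| ≤ M) (hb : |b| ≤ M) (hw : |w| ≤ M) :
    |c * ((a + b - 2 * w) / h ^ 2)| ≤ Lam * (4 * M / h ^ 2) := by
  rw [abs_mul, abs_div, abs_of_nonneg hc, abs_of_nonneg (sq_nonneg h)]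
  have hnum : |a + b - 2 * w| ≤ 4 * M := by
    rw [abs_le] at *
    constructor <;> linarith
  exact mul_le_mul hcLam (div_le_div_of_nonneg_right hnum (sq_nonneg h))
    (by positivity) (hc.trans hcLam)

lemma abs_Lh_le {d : ℕ} {h Lam M : ℝ} {A : Matrix (Fin d) (Fin d) ℝ} (hA : DiagDominant A)
    (hdiag : ∀ i, A i i ≤ Lam) (G : Grid d h) {x : E d} (hx : x ∈ G.interior) {w : E d → ℝ}
    (hw : ∀ y ∈ G.interior ∪ G.boundary, |w y| ≤ M) :
    |Lh d h A w x| ≤ (d + 2 * d ^ 2) * (Lam * (4 * M / h ^ 2)) := by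
  set K := Lam * (4 * M / h ^ 2)
  have hwx : |w x| ≤ M := hw x (Finset.mem_union_left _ hx)
  have hM : 0 ≤ M := (abs_nonneg _).trans hwx
  have hsum_axis : |∑ i : Fin d, (A i i - ∑ j ∈ Finset.univ.erase i, |A i j|) *
      ((w (x + h • e d i) + w (x - h • e d i) - 2 * w x) / h ^ 2)| ≤ d * K := by
    refine (abs_sum_le_card_mul (B := K) Finset.univ _ fun i _ => ?_).trans_eq (by simp)
    exact abs_mul_secondDiff_le (sub_nonneg.2 (hA i))
      ((sub_le_self _ (Finset.sum_nonneg fun _ _ => abs_nonneg _)).trans (hdiag i))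
      (hw _ (G.stencil_ax x hx i).1) (hw _ (G.stencil_ax x hx i).2) hwx
  have hsum_diag : |∑ i : Fin d, ∑ j ∈ Finset.univ.filter (fun j => i < j),
      (max (A i j) 0 *
        ((w (x + h • (e d i + e d j)) + w (x - h • (e d i + e d j)) - 2 * w x) / h ^ 2) +
      max (-A i j) 0 *
        ((w (x + h • (e d i - e d j)) + w (x - h • (e d i - e d j)) - 2 * w x) / h ^ 2))|
      ≤ d * (d * (2 * K)) := by
    refine (abs_sum_le_card_mul (B := d * (2 * K)) Finset.univ _ fun i _ => ?_).trans_eq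
      (by simp)
    have hK : 0 ≤ K := by
      have := (hA.diag_nonneg i).trans (hdiag i)
      positivity
    refine (abs_sum_le_card_mul _ _ fun j hj => ?_).trans
      (mul_le_mul_of_nonneg_right ?_ (by positivity))
    · have hij : i < j := (Finset.mem_filter.1 hj).2
      have hAij := hA.abs_apply_le hij.ne'
      have hcoeff : ∀ a : ℝ, |a| ≤ A i i → max a 0 ≤ Lam := fun a ha =>
        (max_le ((le_abs_self a).trans ha) (hA.diag_nonneg i)).trans (hdiag i)
      obtain ⟨h1, h2, h3, h4⟩ := G.stencil_diag x hx i j hij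
      refine (abs_add_le _ _).trans ((add_le_add ?_ ?_).trans_eq (two_mul K).symm)
      · exact abs_mul_secondDiff_le (le_max_right _ _) (hcoeff _ hAij) (hw _ h1) (hw _ h2) hwx
      · exact abs_mul_secondDiff_le (le_max_right _ _) (hcoeff _ ((abs_neg _).trans_le hAij))
          (hw _ h3) (hw _ h4) hwx
    · exact_mod_cast (Finset.card_le_univ _).trans_eq (Fintype.card_fin d)
  calc |Lh d h A w x| ≤ d * K + d * (d * (2 * K)) := (abs_add_le _ _).trans
        (add_le_add hsum_axis hsum_diag)
    _ = (d + 2 * d ^ 2) * K := by ring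

lemma abs_Fh_sub_Fh_le {d : ℕ} {ιA ιB : Type*} [Nonempty ιA] [Nonempty ιB] {h Lam M : ℝ}
    {A : ιA → ιB → Matrix (Fin d) (Fin d) ℝ} (hA : ∀ a b, DiagDominant (A a b))
    (hdiag : ∀ a b i, A a b i i ≤ Lam) (G : Grid d h) {x : E d} (hx : x ∈ G.interior)
    {u v : E d → ℝ} (huv : ∀ y ∈ G.interior ∪ G.boundary, |u y - v y| ≤ M) :
    |Fh d h A u x - Fh d h A v x| ≤ (d + 2 * d ^ 2) * (Lam * (4 * M / h ^ 2)) :=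
  abs_ciSup_sub_ciSup_le fun a => abs_ciInf_sub_ciInf_le fun b => by
    rw [neg_sub_neg, abs_sub_comm, Lh_sub]
    exact abs_Lh_le (hA a b) (hdiag a b) G hx huv

def upwindVec (d : ℕ) (h : ℝ) (u : E d → ℝ) (x : E d) : E d :=
  WithLp.toLp 2 fun i => max (max (u x - u (x + h • e d i)) (u x - u (x - h • e d i))) 0 / h

section Upwind

variable {d : ℕ} {h M : ℝ} {u v : E d → ℝ} {x : E d}

lemma upwindSq_eq_norm_sq : upwindSq d h u x = ‖upwindVec d h u x‖ ^ 2 := by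
  rw [EuclideanSpace.real_norm_sq_eq, upwindSq, Finset.mul_sum]
  refine Finset.sum_congr rfl fun i _ => ?_
  simp only [upwindVec, div_pow, one_div, inv_mul_eq_div]

lemma upwindSq_nonneg : 0 ≤ upwindSq d h u x := by
  rw [upwindSq_eq_norm_sq]
  positivity

lemma abs_upwindVec_sub_le (hh : 0 < h) (G : Grid d h) (hx : x ∈ G.interior)
    (huv : ∀ y ∈ G.interior ∪ G.boundary, |u y - v y| ≤ M) (i : Fin d) :
    |upwindVec d h u x i - upwindVec d h v x i| ≤ 2 * M / h := by
  have hdiff : ∀ y ∈ G.interior ∪ G.boundary, |(u x - u y) - (v x - v y)| ≤ 2 * M := by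
    intro y hy
    rw [show (u x - u y) - (v x - v y) = (u x - v x) - (u y - v y) by ring]
    linarith [abs_sub (u x - v x) (u y - v y), huv x (Finset.mem_union_left _ hx), huv y hy]
  have hM : 0 ≤ 2 * M := (abs_nonneg _).trans (hdiff x (Finset.mem_union_left _ hx))
  simp only [upwindVec, ← sub_div, abs_div, abs_of_pos hh]
  gcongr
  refine (abs_max_sub_max_le_max _ _ _ _).trans (max_le ?_ (by simpa using hM))
  exact (abs_max_sub_max_le_max _ _ _ _).trans
    (max_le (hdiff _ (G.stencil_ax x hx i).1) (hdiff _ (G.stencil_ax x hx i).2))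

lemma norm_upwindVec_sub_le (hh : 0 < h) (G : Grid d h) (hx : x ∈ G.interior)
    (huv : ∀ y ∈ G.interior ∪ G.boundary, |u y - v y| ≤ M) :
    ‖upwindVec d h u x - upwindVec d h v x‖ ≤ √d * (2 * M / h) := by
  have hM : 0 ≤ 2 * M / h :=
    div_nonneg (by linarith [abs_nonneg (u x - v x), huv x (Finset.mem_union_left _ hx)]) hh.le
  rw [EuclideanSpace.norm_eq, ← Real.sqrt_sq hM, ← Real.sqrt_mul (Nat.cast_nonneg d)]
  refine Real.sqrt_le_sqrt ((Finset.sum_le_card_nsmul _ _ ((2 * M / h) ^ 2) fun i _ => ?_).trans_eq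
    (by simp))
  rw [Real.norm_eq_abs, PiLp.sub_apply]
  exact pow_le_pow_left₀ (abs_nonneg _) (abs_upwindVec_sub_le hh G hx huv i) 2

lemma abs_sqrt_add_upwindSq_sub_le {ε : ℝ} (hε : 0 ≤ ε) (hh : 0 < h) (G : Grid d h)
    (hx : x ∈ G.interior) (huv : ∀ y ∈ G.interior ∪ G.boundary, |u y - v y| ≤ M) :
    |√(ε + upwindSq d h u x) - √(ε + upwindSq d h v x)| ≤ √d * (2 * M / h) := by
  rw [upwindSq_eq_norm_sq, upwindSq_eq_norm_sq]
  exact (abs_sqrt_add_sq_sub_sqrt_add_sq_le hε _ _).trans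
    ((abs_norm_sub_norm_le _ _).trans (norm_upwindVec_sub_le hh G hx huv))

lemma abs_div_rpow_upwindSq_sub_le {ε θ Kf a : ℝ} (hε : 0 < ε) (hθ : 0 ≤ θ) (ha : |a| ≤ Kf)
    (hh : 0 < h) (G : Grid d h) (hx : x ∈ G.interior)
    (huv : ∀ y ∈ G.interior ∪ G.boundary, |u y - v y| ≤ M) :
    |a / (ε + upwindSq d h u x) ^ (θ / 2) - a / (ε + upwindSq d h v x) ^ (θ / 2)| ≤
      Kf * (θ * √ε ^ (-θ - 1) * (√d * (2 * M / h))) := by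
  have hrpow : ∀ s : ℝ, 0 ≤ s → a / (ε + s) ^ (θ / 2) = a * √(ε + s) ^ (-θ) := fun s hs => by
    rw [Real.rpow_div_two_eq_sqrt _ (by positivity), Real.rpow_neg (Real.sqrt_nonneg _),
      div_eq_mul_inv]
  have hsqrt : ∀ s : ℝ, 0 ≤ s → √ε ≤ √(ε + s) := fun s hs =>
    Real.sqrt_le_sqrt (le_add_of_nonneg_right hs)
  rw [hrpow _ upwindSq_nonneg, hrpow _ upwindSq_nonneg, ← mul_sub, abs_mul]
  refine mul_le_mul ha ?_ (abs_nonneg _) ((abs_nonneg _).trans ha)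
  refine (abs_rpow_neg_sub_rpow_neg_le hθ (Real.sqrt_pos.2 hε) (hsqrt _ upwindSq_nonneg)
    (hsqrt _ upwindSq_nonneg)).trans ?_
  have := Real.rpow_pos_of_pos (Real.sqrt_pos.2 hε) (-θ - 1)
  exact mul_le_mul_of_nonneg_left (abs_sqrt_add_upwindSq_sub_le hε.le hh G hx huv)
    (by positivity)

end Upwind

section Scheme

variable {d : ℕ} {ιA ιB : Type*} {h ε θ : ℝ} {A : ιA → ιB → Matrix (Fin d) (Fin d) ℝ}
  {G : Grid d h} {f g u v : E d → ℝ} {x : E d}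

lemma scheme_sub_scheme_of_notMem_interior (hx : x ∉ G.interior) :
    scheme d ε θ A G f g u x - scheme d ε θ A G f g v x = u x - v x := by
  simp only [scheme, if_neg hx]
  ring

lemma abs_scheme_sub_scheme_le_of_mem_interior [Nonempty ιA] [Nonempty ιB] {lam Lam Kf M : ℝ}
    (hA : IsaacsData d lam Lam A) (hh : 0 < h) (hε : 0 < ε) (hθ : 0 ≤ θ) (hx : x ∈ G.interior)
    (hf : |f x| ≤ Kf) (huv : ∀ y ∈ G.interior ∪ G.boundary, |u y - v y| ≤ M) :
    |scheme d ε θ A G f g u x - scheme d ε θ A G f g v x| ≤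
      ε * M + (d + 2 * d ^ 2) * (Lam * (4 * M / h ^ 2)) +
        Kf * (θ * √ε ^ (-θ - 1) * (√d * (2 * M / h))) := by
  have hdecomp : scheme d ε θ A G f g u x - scheme d ε θ A G f g v x =
      ε * (u x - v x) + (Fh d h A u x - Fh d h A v x) -
        (f x / (ε + upwindSq d h u x) ^ (θ / 2) - f x / (ε + upwindSq d h v x) ^ (θ / 2)) := by
    simp only [scheme, if_pos hx]
    ring
  have hlin : |ε * (u x - v x)| ≤ ε * M := by
    rw [abs_mul, abs_of_pos hε]
    exact mul_le_mul_of_nonneg_left (huv x (Finset.mem_union_left _ hx)) hε.le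
  rw [hdecomp]
  refine (abs_sub _ _).trans (add_le_add ((abs_add_le _ _).trans (add_le_add hlin ?_)) ?_)
  · exact abs_Fh_sub_Fh_le (fun a b => (hA a b).2.1)
      (fun a b => diag_le_of_posSemidef_smul_one_sub (hA a b).2.2.2) G hx huv
  · exact abs_div_rpow_upwindSq_sub_le hε hθ hf hh G hx huv

end Scheme

def schemeLipConst (d : ℕ) (Lam h ε θ Kf : ℝ) : ℝ :=
  1 + ε + (d + 2 * d ^ 2) * (Lam * (4 / h ^ 2)) + Kf * (θ * √ε ^ (-θ - 1) * (√d * (2 / h)))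

theorem scheme_lipschitz_general {d : ℕ} (Lam h ε θ Kf : ℝ)
    (hLam : 0 < Lam) (hh : 0 < h) (hε0 : 0 < ε) (hθ : 1 ≤ θ)
    (hKf : 0 ≤ Kf) :
    ∃ C : ℝ, 0 < C ∧
      ∀ (lam : ℝ), 0 < lam → lam ≤ Lam →
      ∀ (ιA ιB : Type) (_ : Nonempty ιA) (_ : Nonempty ιB)
        (A : ιA → ιB → Matrix (Fin d) (Fin d) ℝ), IsaacsData d lam Lam A →
      ∀ (G : Grid d h),
      ∀ (f : E d → ℝ), (∀ x ∈ G.interior, |f x| ≤ Kf) →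
      ∀ (g : E d → ℝ),
      ∀ (u v : E d → ℝ), ∀ x ∈ G.interior ∪ G.boundary,
        |scheme d ε θ A G f g u x - scheme d ε θ A G f g v x| ≤
          C * (G.interior ∪ G.boundary).sup' G.nonempty (fun y => |u y - v y|) := by
  have hθ0 : 0 ≤ θ := zero_le_one.trans hθ
  have hpow := Real.rpow_pos_of_pos (Real.sqrt_pos.2 hε0) (-θ - 1)
  refine ⟨schemeLipConst d Lam h ε θ Kf, by unfold schemeLipConst; positivity, ?_⟩
  intro lam _ _ ιA ιB _ _ A hA G f hf g u v x hx
  set M := (G.interior ∪ G.boundary).sup' G.nonempty fun y => |u y - v y|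
  have huv : ∀ y ∈ G.interior ∪ G.boundary, |u y - v y| ≤ M :=
    fun y hy => Finset.le_sup' (fun y => |u y - v y|) hy
  have hM : 0 ≤ M := (abs_nonneg _).trans (huv x hx)
  set B := ε * M + (d + 2 * d ^ 2) * (Lam * (4 * M / h ^ 2)) +
    Kf * (θ * √ε ^ (-θ - 1) * (√d * (2 * M / h)))
  have hB : 0 ≤ B := by positivity
  have hCM : schemeLipConst d Lam h ε θ Kf * M = M + B := by
    simp only [schemeLipConst, B]
    ring
  by_cases hxi : x ∈ G.interior
  · linarith [abs_scheme_sub_scheme_le_of_mem_interior (g := g) hA hh hε0 hθ0 hxi (hf x hxi) huv]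
  · rw [scheme_sub_scheme_of_notMem_interior hxi]
    linarith [huv x hx]

/-- Lipschitz continuity of the scheme for the pure degenerate
equation: there is `C > 0` depending only on `d, Λ, ε, h, θ, K_f` such that
`max |G_h(u,·) − G_h(v,·)| ≤ C max |u − v|` over the grid. -/
theorem scheme_lipschitz {d : ℕ} (hd : 1 ≤ d) (Lam h ε θ Kf : ℝ)
    (hLam : 0 < Lam) (hh : 0 < h) (hε0 : 0 < ε) (hε1 : ε < 1) (hθ : 1 ≤ θ)
    (hKf : 0 ≤ Kf) :
    ∃ C : ℝ, 0 < C ∧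
      ∀ (lam : ℝ), 0 < lam → lam ≤ Lam →
      ∀ (ιA ιB : Type) (_ : Nonempty ιA) (_ : Nonempty ιB)
        (A : ιA → ιB → Matrix (Fin d) (Fin d) ℝ), IsaacsData d lam Lam A →
      ∀ (G : Grid d h),
      ∀ (f : E d → ℝ), (∀ x ∈ G.interior, |f x| ≤ Kf) →
      ∀ (g : E d → ℝ),
      ∀ (u v : E d → ℝ), ∀ x ∈ G.interior ∪ G.boundary,
        |scheme d ε θ A G f g u x - scheme d ε θ A G f g v x| ≤
          C * (G.interior ∪ G.boundary).sup' G.nonempty (fun y => |u y - v y|) :=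
  scheme_lipschitz_general Lam h ε θ Kf hLam hh hε0 hθ hKf

end Paper
end
end

section
/- (The Euler solution operator is a strict contraction.) Let V be a finite nonempty set, ε > 0 and K > 0. Let G be a map sending each function u : V → ℝ to a function G u : V → ℝ, and assume: (i) (degenerate ellipticity) for all u, v : V → ℝ and x ∈ V with u ≤ v pointwise and u(x) = v(x), one has G v (x) ≤ G u (x); (ii) (properness under translations) G(u + c)(x) = G u (x) + ε c for every u : V → ℝ, every constant c ∈ ℝ and every x ∈ V; (iii) (Lipschitz continuity) max_{x∈V} |G u (x) − G v (x)| ≤ K max_{x∈V} |u(x) − v(x)| for all u, v. For ρ > 0 define the Euler operator S_ρ u := u − ρ G u. Then for every 0 < ρ ≤ 1/K, S_ρ is a strict contraction in the sup norm: max_{x∈V} |S_ρ u (x) − S_ρ v (x)| ≤ (1 − ρ ε) max_{x∈V} |u(x) − v(x)| for all u, v : V → ℝ, where 0 ≤ 1 − ρε < 1 (indeed ε ≤ K follows from (ii) and (iii)). In particular S_ρ has a unique fixed point. -/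
open scoped BigOperators
open MeasureTheory
open scoped Classical

noncomputable section

namespace Paper

/-- The Euler solution operator `S_ρ u = u − ρ G u` associated
with a degenerate elliptic, proper, Lipschitz scheme is a strict contraction in
the sup norm for `0 < ρ ≤ 1/K`, with contraction factor `1 − ρε ∈ [0, 1)`; in
particular it has a unique fixed point. -/
theorem euler_operator_contraction {V : Type*} [Fintype V] [Nonempty V]
    (ε K : ℝ) (hε : 0 < ε) (hK : 0 < K)
    (G : (V → ℝ) → (V → ℝ))
    (hDE : ∀ (u v : V → ℝ) (x : V), (∀ y, u y ≤ v y) → u x = v x → G v x ≤ G u x)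
    (hProper : ∀ (u : V → ℝ) (c : ℝ) (x : V), G (fun y => u y + c) x = G u x + ε * c)
    (hLip : ∀ u v : V → ℝ,
      Finset.univ.sup' Finset.univ_nonempty (fun x => |G u x - G v x|) ≤
        K * Finset.univ.sup' Finset.univ_nonempty (fun x => |u x - v x|)) :
    ∀ ρ : ℝ, 0 < ρ → ρ ≤ 1 / K →
      (∀ u v : V → ℝ,
        Finset.univ.sup' Finset.univ_nonempty
            (fun x => |(u x - ρ * G u x) - (v x - ρ * G v x)|) ≤
          (1 - ρ * ε) *
            Finset.univ.sup' Finset.univ_nonempty (fun x => |u x - v x|)) ∧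
      0 ≤ 1 - ρ * ε ∧ 1 - ρ * ε < 1 ∧
      ∃! w : V → ℝ, (fun x => w x - ρ * G w x) = w := by

  intro ρ hρ hρK
  have hρK' : ρ * K ≤ 1 := (le_div_iff₀ hK).1 hρK
  -- ε ≤ K
  have hεK : ε ≤ K := by
    have h1 := hLip (fun y => (0:ℝ) + 1) (fun _ => (0:ℝ))
    have h2 : ∀ x : V, G (fun y => (0:ℝ) + 1) x - G (fun _ => (0:ℝ)) x = ε := by
      intro x
      have := hProper (fun _ => (0:ℝ)) 1 x
      simp at this ⊢
      linarith [this]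
    have h3 : (Finset.univ.sup' Finset.univ_nonempty
        (fun x : V => |G (fun y => (0:ℝ) + 1) x - G (fun _ => (0:ℝ)) x|)) = ε := by
      have : (fun x : V => |G (fun y => (0:ℝ) + 1) x - G (fun _ => (0:ℝ)) x|)
          = fun _ : V => ε := by
        funext x; rw [h2 x, abs_of_pos hε]
      rw [this, Finset.sup'_const]
    have h4 : (Finset.univ.sup' Finset.univ_nonempty
        (fun x : V => |((0:ℝ) + 1) - (0:ℝ)|)) = 1 := by
      simp
    rw [h3, h4, mul_one] at h1
    exact h1
  have hfac0 : 0 ≤ 1 - ρ * ε := by nlinarith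
  have hfac1 : 1 - ρ * ε < 1 := by nlinarith
  -- monotonicity of the Euler map
  have mono : ∀ u v : V → ℝ, (∀ y, u y ≤ v y) → ∀ x,
      u x - ρ * G u x ≤ v x - ρ * G v x := by
    intro u v huv x
    set t := v x - u x with ht
    have ht0 : 0 ≤ t := sub_nonneg.2 (huv x)
    set w : V → ℝ := fun y => max (u y) (v y - t) with hw
    have hwu : ∀ y, u y ≤ w y := fun y => le_max_left _ _
    have hwx : u x = w x := by
      simp only [hw, ht]
      rw [max_eq_left]; linarith
    have h1 : G w x ≤ G u x := hDE u w x hwu hwx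
    have h2 : |G v x - G w x| ≤ K * t := by
      have hle : |G v x - G w x| ≤ Finset.univ.sup' Finset.univ_nonempty
          (fun y => |G v y - G w y|) :=
        Finset.le_sup' (fun y => |G v y - G w y|) (Finset.mem_univ x)
      have hsup : Finset.univ.sup' Finset.univ_nonempty
          (fun y => |v y - w y|) ≤ t := by
        apply Finset.sup'_le
        intro y _
        have : v y - w y = min (v y - u y) t := by
          simp only [hw]
          rcases le_total (u y) (v y - t) with h | h
          · rw [max_eq_right h, min_eq_right]; ring_nf; linarith
          · rw [max_eq_left h, min_eq_left]; linarith
        rw [this, abs_le]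
        constructor
        · have := huv y
          exact le_min (by linarith) (by linarith)
        · exact min_le_right _ _
      calc |G v x - G w x| ≤ _ := hle
        _ ≤ K * Finset.univ.sup' Finset.univ_nonempty (fun y => |v y - w y|) :=
            hLip v w
        _ ≤ K * t := by nlinarith [hsup]
    have h3 : G v x - G u x ≤ K * t := by
      have := abs_le.1 h2
      linarith
    have h4 : ρ * (G v x - G u x) ≤ t := by
      calc ρ * (G v x - G u x) ≤ ρ * (K * t) := by nlinarith
        _ = (ρ * K) * t := by ring
        _ ≤ 1 * t := by nlinarith
        _ = t := one_mul t
    linarith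
  -- pointwise contraction estimate
  have key : ∀ u v : V → ℝ, ∀ x,
      (u x - ρ * G u x) - (v x - ρ * G v x) ≤
        (1 - ρ * ε) * Finset.univ.sup' Finset.univ_nonempty
          (fun y => |u y - v y|) := by
    intro u v x
    set M := Finset.univ.sup' Finset.univ_nonempty (fun y => |u y - v y|) with hM
    have huvM : ∀ y, u y ≤ v y + M := by
      intro y
      have : |u y - v y| ≤ M := Finset.le_sup' (fun y => |u y - v y|) (Finset.mem_univ y)
      have := (abs_le.1 this).2
      linarith
    have := mono u (fun y => v y + M) huvM x
    rw [hProper v M x] at this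
    linarith
  have habs : ∀ u v : V → ℝ, ∀ x,
      |(u x - ρ * G u x) - (v x - ρ * G v x)| ≤
        (1 - ρ * ε) * Finset.univ.sup' Finset.univ_nonempty
          (fun y => |u y - v y|) := by
    intro u v x
    have h1 := key u v x
    have h2 := key v u x
    have hMsymm : Finset.univ.sup' Finset.univ_nonempty (fun y => |v y - u y|)
        = Finset.univ.sup' Finset.univ_nonempty (fun y => |u y - v y|) := by
      congr 1; funext y; exact abs_sub_comm _ _
    rw [hMsymm] at h2
    rw [abs_le]
    constructor <;> linarith
  have hcontr : ∀ u v : V → ℝ,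
      Finset.univ.sup' Finset.univ_nonempty
          (fun x => |(u x - ρ * G u x) - (v x - ρ * G v x)|) ≤
        (1 - ρ * ε) * Finset.univ.sup' Finset.univ_nonempty
          (fun x => |u x - v x|) := by
    intro u v
    exact Finset.sup'_le _ _ fun x _ => habs u v x
  refine ⟨hcontr, hfac0, hfac1, ?_⟩
  -- fixed point via the Banach fixed point theorem
  set S : (V → ℝ) → (V → ℝ) := fun u x => u x - ρ * G u x with hS
  set k : NNReal := Real.toNNReal (1 - ρ * ε) with hk
  have hkcoe : (k : ℝ) = 1 - ρ * ε := Real.coe_toNNReal _ hfac0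
  have hLipS : LipschitzWith k S := by
    apply LipschitzWith.of_dist_le_mul
    intro u v
    rw [hkcoe]
    rw [dist_pi_le_iff (by positivity)]
    intro x
    rw [Real.dist_eq]
    have hMd : Finset.univ.sup' Finset.univ_nonempty (fun y => |u y - v y|)
        ≤ dist u v := by
      apply Finset.sup'_le
      intro y _
      rw [← Real.dist_eq]
      exact dist_le_pi_dist u v y
    calc |S u x - S v x| ≤ (1 - ρ * ε) *
          Finset.univ.sup' Finset.univ_nonempty (fun y => |u y - v y|) :=
        habs u v x
      _ ≤ (1 - ρ * ε) * dist u v := by nlinarith [dist_nonneg (x := u) (y := v)]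
  have hCW : ContractingWith k S := by
    constructor
    · rw [← NNReal.coe_lt_coe, hkcoe]; exact_mod_cast hfac1
    · exact hLipS
  refine ⟨hCW.fixedPoint S, hCW.fixedPoint_isFixedPt, fun w hw => hCW.fixedPoint_unique hw⟩


end Paper
end
end
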